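/- Let r, n ≥ 1 be integers, let S = ℂ[[t₁,…,tₙ]], and for i = 1,…,n let Aᵢ, Ãᵢ ∈ M_r(S) (matrices independent of z). Suppose T ∈ M_r(S[[z]]) satisfies 0 = z·∂_{tᵢ}T + Aᵢ·T − T·Ãᵢ for all i = 1,…,n, and the evaluation of T at t₁ = ⋯ = tₙ = 0 is the identity matrix 1_r (as an element of M_r(ℂ[[z]])). Then T = 1_r (and consequently Aᵢ = Ãᵢ for all i). -/

import Mathlib

open Matrix

noncomputable section

/-- `S = ℂ[[t₁,…,tₙ]]`. -/
abbrev S (n : ℕ) : Type := MvPowerSeries (Fin n) ℂ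

/-- `S[[z]] = ℂ[[t₁,…,tₙ]][[z]]`. -/
abbrev SZ (n : ℕ) : Type := PowerSeries (S n)

/-- Formal partial derivative `∂/∂tᵢ` on `ℂ[[t₁,…,tₙ]]`. -/
def pd {n : ℕ} (i : Fin n) (f : S n) : S n :=
  fun d => ((d i : ℂ) + 1) * MvPowerSeries.coeff (d + Finsupp.single i 1) f

/-- Formal partial derivative `∂/∂tᵢ` on `S[[z]]`, acting coefficientwise. -/
def pdZ {n : ℕ} (i : Fin n) (f : SZ n) : SZ n :=
  PowerSeries.mk fun k => pd i (PowerSeries.coeff k f)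

/-- Entrywise formal partial derivative `∂/∂tᵢ` on matrices over `S[[z]]`. -/
def pdM {n r : ℕ} (i : Fin n) (X : Matrix (Fin r) (Fin r) (SZ n)) :
    Matrix (Fin r) (Fin r) (SZ n) := X.map (pdZ i)

/-- The inclusion `S → S[[z]]` of `z`-independent series. -/
def liftS {n : ℕ} : S n →+* SZ n := PowerSeries.C

/-- Evaluation at `t₁ = ⋯ = tₙ = 0`, i.e. the map `S[[z]] → ℂ[[z]]`. -/
def evalT {n : ℕ} : SZ n →+* PowerSeries ℂ :=
  PowerSeries.map (MvPowerSeries.constantCoeff)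

/-- Complex constants in `S[[z]]`. -/
def constS {n : ℕ} : ℂ →+* SZ n := liftS.comp (MvPowerSeries.C)

lemma coeff_pd {n : ℕ} (i : Fin n) (f : S n) (b : Fin n →₀ ℕ) :
    MvPowerSeries.coeff b (pd i f)
      = ((b i : ℂ) + 1) * MvPowerSeries.coeff (b + Finsupp.single i 1) f := rfl

def deg {n : ℕ} (a : Fin n →₀ ℕ) : ℕ := ∑ j, a j

lemma deg_add {n : ℕ} (a b : Fin n →₀ ℕ) : deg (a + b) = deg a + deg b := by
  simp [deg, Finset.sum_add_distrib]

lemma deg_single {n : ℕ} (i : Fin n) : deg (Finsupp.single i 1) = 1 := by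
  simp [deg, Finsupp.single_apply]

lemma deg_eq_zero {n : ℕ} (a : Fin n →₀ ℕ) (h : deg a = 0) : a = 0 := by
  ext j
  have := Finset.sum_eq_zero_iff.mp h j (Finset.mem_univ j)
  simpa using this

/-- **Rigidity lemma from the proof of Theorem 5.6 of David–Hertling.** If
`Aᵢ, Ãᵢ ∈ M_r(ℂ[[t₁,…,tₙ]])` are `z`-independent matrices and `T ∈ M_r(S[[z]])` satisfies
`0 = z∂ᵢT + AᵢT − TÃᵢ` for all `i` and `T` evaluated at `t = 0` is the identity matrix,
then `T = 1` (and consequently `Aᵢ = Ãᵢ` for all `i`). -/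
theorem gauge_rigidity (r n : ℕ) (hr : 1 ≤ r) (hn : 1 ≤ n)
    (A A' : Fin n → Matrix (Fin r) (Fin r) (S n))
    (T : Matrix (Fin r) (Fin r) (SZ n))
    (hT : ∀ i : Fin n,
      (PowerSeries.X : SZ n) • pdM i T + (A i).map liftS * T - T * (A' i).map liftS = 0)
    (h0 : T.map evalT = 1) :
    T = 1 ∧ ∀ i : Fin n, A i = A' i := by
  classical
  -- scalar form of the equation
  have hscal : ∀ (i : Fin n) (k : ℕ) (p q : Fin r),
      pd i (PowerSeries.coeff k (T p q))
        + ∑ j, A i p j * PowerSeries.coeff (k+1) (T j q)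
        - ∑ j, PowerSeries.coeff (k+1) (T p j) * A' i j q = 0 := by
    intro i k p q
    have h := congrFun (congrFun (hT i) p) q
    simp only [Matrix.add_apply, Matrix.sub_apply, Matrix.smul_apply, Matrix.mul_apply,
      Matrix.map_apply, pdM, smul_eq_mul, Matrix.zero_apply] at h
    have h2 := congrArg (PowerSeries.coeff (k+1)) h
    simpa [map_sub, map_add, map_sum, PowerSeries.coeff_succ_X_mul, pdZ, PowerSeries.coeff_mk,
      liftS, PowerSeries.coeff_C_mul, PowerSeries.coeff_mul_C] using h2
  -- evaluation at t = 0
  have hev : ∀ (k : ℕ) (p q : Fin r),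
      MvPowerSeries.coeff 0 (PowerSeries.coeff k (T p q))
        = PowerSeries.coeff k ((1 : Matrix (Fin r) (Fin r) (PowerSeries ℂ)) p q) := by
    intro k p q
    have h := congrFun (congrFun h0 p) q
    have h2 := congrArg (PowerSeries.coeff k) h
    simpa [Matrix.map_apply, evalT, PowerSeries.coeff_map,
      MvPowerSeries.coeff_zero_eq_constantCoeff] using h2
  -- the key induction
  have key : ∀ (N k : ℕ) (a : Fin n →₀ ℕ), 2 * k + 3 * deg a ≤ N → (k ≠ 0 ∨ a ≠ 0) →
      ∀ p q : Fin r, MvPowerSeries.coeff a (PowerSeries.coeff k (T p q)) = 0 := by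
    intro N
    induction N with
    | zero =>
      intro k a hle hne p q
      rcases hne with h | h
      · omega
      · exact absurd (deg_eq_zero a (by omega)) h
    | succ N ih =>
      intro k a hle hne p q
      by_cases ha : a = 0
      · subst ha
        rcases hne with hk | h
        · rw [hev k p q]
          rcases eq_or_ne p q with rfl | hpq
          · simp [Matrix.one_apply, PowerSeries.coeff_one, hk]
          · simp [Matrix.one_apply_ne hpq]
        · exact absurd rfl h
      · obtain ⟨i, hi⟩ : ∃ i, a i ≠ 0 := by
          by_contra hc
          push_neg at hc
          exact ha (Finsupp.ext fun j => hc j)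
        set b : Fin n →₀ ℕ := a - Finsupp.single i 1 with hb
        have hba : b + Finsupp.single i 1 = a := by
          ext j
          simp only [Finsupp.add_apply, hb, Finsupp.tsub_apply, Finsupp.single_apply]
          rcases eq_or_ne i j with rfl | hij
          · simp; omega
          · simp [hij]
        have hdeg : deg b + 1 = deg a := by
          rw [← hba, deg_add, deg_single]
        -- coefficient of b in the scalar equation
        have h := congrArg (MvPowerSeries.coeff b) (hscal i k p q)
        rw [map_sub, map_add, map_sum, map_sum, coeff_pd, hba] at h
        -- kill all product terms using ih
        have hsum1 : ∀ j : Fin r,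
            MvPowerSeries.coeff b (A i p j * PowerSeries.coeff (k+1) (T j q)) = 0 := by
          intro j
          rw [MvPowerSeries.coeff_mul]
          apply Finset.sum_eq_zero
          intro x hx
          have hxv : x.1 + x.2 = b := Finset.HasAntidiagonal.mem_antidiagonal.mp hx
          have hvle : deg x.2 ≤ deg b := by
            rw [← hxv, deg_add]; omega
          have : MvPowerSeries.coeff x.2 (PowerSeries.coeff (k+1) (T j q)) = 0 := by
            apply ih (k+1) x.2 ?_ (Or.inl (Nat.succ_ne_zero k)) j q
            omega
          rw [this, mul_zero]
        have hsum2 : ∀ j : Fin r,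
            MvPowerSeries.coeff b (PowerSeries.coeff (k+1) (T p j) * A' i j q) = 0 := by
          intro j
          rw [MvPowerSeries.coeff_mul]
          apply Finset.sum_eq_zero
          intro x hx
          have hxv : x.1 + x.2 = b := Finset.HasAntidiagonal.mem_antidiagonal.mp hx
          have hvle : deg x.1 ≤ deg b := by
            rw [← hxv, deg_add]; omega
          have : MvPowerSeries.coeff x.1 (PowerSeries.coeff (k+1) (T p j)) = 0 := by
            apply ih (k+1) x.1 ?_ (Or.inl (Nat.succ_ne_zero k)) p j
            omega
          rw [this, zero_mul]
        rw [Finset.sum_eq_zero (fun j _ => hsum1 j), Finset.sum_eq_zero (fun j _ => hsum2 j)] at h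
        simp only [add_zero, sub_zero, map_zero] at h
        have hne' : ((b i : ℂ) + 1) ≠ 0 := Nat.cast_add_one_ne_zero (b i)
        exact (mul_eq_zero.mp h).resolve_left hne'
  have hT1 : T = 1 := by
    refine Matrix.ext fun p q => ?_
    refine PowerSeries.ext fun k => ?_
    refine MvPowerSeries.ext fun a => ?_
    by_cases hka : k = 0 ∧ a = 0
    · obtain ⟨rfl, rfl⟩ := hka
      rw [hev 0 p q]
      rcases eq_or_ne p q with rfl | hpq
      · simp [Matrix.one_apply, PowerSeries.coeff_one, MvPowerSeries.coeff_one]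
      · simp [Matrix.one_apply_ne hpq]
    · have hne : k ≠ 0 ∨ a ≠ 0 := by tauto
      rw [key (2 * k + 3 * deg a) k a le_rfl hne p q]
      rcases eq_or_ne p q with rfl | hpq
      · rcases hne with hk | ha'
        · simp [Matrix.one_apply, PowerSeries.coeff_one, hk]
        · rcases eq_or_ne k 0 with rfl | hk
          · simp [Matrix.one_apply, PowerSeries.coeff_one, MvPowerSeries.coeff_one, ha']
          · simp [Matrix.one_apply, PowerSeries.coeff_one, hk]
      · simp [Matrix.one_apply_ne hpq]
  refine ⟨hT1, fun i => ?_⟩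
  have h := hT i
  rw [hT1] at h
  have hpdM1 : pdM (r := r) i (1 : Matrix (Fin r) (Fin r) (SZ n)) = 0 := by
    refine Matrix.ext fun p q => ?_
    refine PowerSeries.ext fun k => ?_
    refine MvPowerSeries.ext fun a => ?_
    simp only [pdM, Matrix.map_apply, pdZ, PowerSeries.coeff_mk, Matrix.zero_apply, map_zero,
      coeff_pd]
    have : MvPowerSeries.coeff (a + Finsupp.single i 1)
        (PowerSeries.coeff k ((1 : Matrix (Fin r) (Fin r) (SZ n)) p q)) = 0 := by
      have hane : a + Finsupp.single i 1 ≠ 0 := by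
        intro hc
        have := congrArg (fun f : Fin n →₀ ℕ => f i) hc
        simp [Finsupp.single_apply] at this
      rcases eq_or_ne p q with rfl | hpq
      · rcases eq_or_ne k 0 with rfl | hk
        · simp [Matrix.one_apply, PowerSeries.coeff_one, MvPowerSeries.coeff_one, hane]
        · simp [Matrix.one_apply, PowerSeries.coeff_one, hk]
      · simp [Matrix.one_apply_ne hpq]
    rw [this, mul_zero]
  rw [hpdM1, smul_zero, zero_add, mul_one, one_mul, sub_eq_zero] at h
  have hinj : Function.Injective (liftS (n := n)) := PowerSeries.C_injective
  refine Matrix.ext fun p q => ?_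
  have := congrFun (congrFun h p) q
  simp only [Matrix.map_apply] at this
  exact hinj this

end
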